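/- Under assumption (LD), if e is differentiable on (a,b) and 0 ∈ (a,b), then for every open set J ⊂ (D⁺e(a), D⁻e(b)), lim_t (1/w_t) log P_t({x : w_t^{-1} X_t(x) ∈ J}) = − inf_{θ∈J} φ(θ) (local Gärtner–Ellis theorem). -/

import Mathlib

/-!
Write `Z_t(s)` for the moment generating function of `X_t` under `P_t`.

Upper bound: cover the closure of `J` by finitely many small balls; on the ball around `q` the
exponential Chebyshev inequality, with a parameter `s` almost attaining the supremum defining
`φ(q)`, gives the decay rate `φ(q)`.

Lower bound: for `θ ∈ J` the supremum defining `φ(θ)` is attained at a point `s ∈ (a,b)` with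
`e'(s) = θ`, because `D⁺e(a) < θ < D⁻e(b)`. Split `Z_t(s)` according to whether `X_t / w_t` is
near `θ`. Each tail is bounded by `Z_t` at a point slightly to the right or to the left of `s`,
and since `θ` is the slope of `e` at `s` both tails are exponentially smaller than `Z_t(s)`.
Hence the event `X_t / w_t ≈ θ` carries most of `Z_t(s)`, so its probability is at least
`exp (-w_t (φ(θ) + o(1)))`.

The subtlety is that `Z_t(s)` may be infinite. The hypothesis then reads `log 0 = 0`, which forces
`e = 0` on an end segment of `[a,b]`. The endpoint slopes keep every parameter needed above
inside the set where `Z_t` is eventually finite.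
-/

open Filter MeasureTheory

/-- Fenchel–Legendre transform of a function `e` on `[a,b]`. -/
noncomputable def flt (a b : ℝ) (e : ℝ → ℝ) (θ : ℝ) : ℝ :=
  sSup ((fun s => θ * s - e s) '' Set.Icc a b)

open Set Topology
open scoped ENNReal

namespace LocalGartnerEllis

noncomputable def eexp (x : ℝ) : ℝ≥0∞ := ENNReal.ofReal (Real.exp x)

lemma eexp_add (x y : ℝ) : eexp (x + y) = eexp x * eexp y := by
  rw [eexp, Real.exp_add, ENNReal.ofReal_mul (Real.exp_pos x).le]; rfl

@[simp] lemma eexp_zero : eexp 0 = 1 := by simp [eexp]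

lemma eexp_le_eexp {x y : ℝ} : eexp x ≤ eexp y ↔ x ≤ y := by
  rw [eexp, eexp, ENNReal.ofReal_le_ofReal_iff (Real.exp_pos y).le, Real.exp_le_exp]

lemma eexp_ne_zero (x : ℝ) : eexp x ≠ 0 := by simp [eexp, Real.exp_pos]

lemma eexp_ne_top (x : ℝ) : eexp x ≠ ⊤ := ENNReal.ofReal_ne_top

lemma two_le_eexp {x : ℝ} (hx : Real.log 2 ≤ x) : 2 ≤ eexp x := by
  simpa [eexp, Real.exp_log] using eexp_le_eexp.2 hx

lemma measurable_eexp : Measurable eexp := ENNReal.measurable_ofReal.comp Real.measurable_exp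

lemma eexp_mul_log_toReal_div {u : ℝ≥0∞} (h0 : u ≠ 0) (htop : u ≠ ⊤) {W : ℝ} (hW : W ≠ 0) :
    eexp (W * (Real.log u.toReal / W)) = u := by
  rw [mul_div_cancel₀ _ hW, eexp, Real.exp_log (ENNReal.toReal_pos h0 htop),
    ENNReal.ofReal_toReal htop]

lemma abs_mul_div_abs_add_one_le (s : ℝ) {ε : ℝ} (hε : 0 ≤ ε) : |s| * (ε / (|s| + 1)) ≤ ε := by
  rw [mul_div_left_comm]
  exact mul_le_of_le_one_right hε ((div_le_one (by positivity)).2 (by linarith))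

section Rate

variable {w : ℝ → ℝ} {u v T : ℝ → ℝ≥0∞} {r r' : ℝ}

/-- `UpperRate w u r` means `limsup (log u t) / w t ≤ r`, `LowerRate w u r` means
`r ≤ liminf (log u t) / w t`. -/
def UpperRate (w : ℝ → ℝ) (u : ℝ → ℝ≥0∞) (r : ℝ) : Prop :=
  ∀ ε > 0, ∀ᶠ t in atTop, u t ≤ eexp (w t * (r + ε))

def LowerRate (w : ℝ → ℝ) (u : ℝ → ℝ≥0∞) (r : ℝ) : Prop :=
  ∀ ε > 0, ∀ᶠ t in atTop, eexp (w t * (r - ε)) ≤ u t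

lemma UpperRate.mono (hw : ∀ t, 0 < w t) (hv : UpperRate w v r)
    (huv : ∀ᶠ t in atTop, u t ≤ v t) (hr : r ≤ r') : UpperRate w u r' := fun ε hε => by
  filter_upwards [hv ε hε, huv] with t hvt hut
  exact hut.trans (hvt.trans (eexp_le_eexp.2 (mul_le_mul_of_nonneg_left (by linarith) (hw t).le)))

lemma LowerRate.mono (hw : ∀ t, 0 < w t) (hv : LowerRate w v r)
    (hvu : ∀ᶠ t in atTop, v t ≤ u t) (hr : r' ≤ r) : LowerRate w u r' := fun ε hε => by
  filter_upwards [hv ε hε, hvu] with t hvt hvut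
  exact (eexp_le_eexp.2 (mul_le_mul_of_nonneg_left (by linarith) (hw t).le)).trans (hvt.trans hvut)

lemma UpperRate.of_forall_add (h : ∀ ε > 0, UpperRate w u (r + ε)) : UpperRate w u r :=
  fun ε hε => by simpa [add_assoc] using h (ε / 2) (half_pos hε) (ε / 2) (half_pos hε)

lemma LowerRate.of_forall_sub (h : ∀ ε > 0, LowerRate w u (r - ε)) : LowerRate w u r :=
  fun ε hε => by simpa [sub_sub] using h (ε / 2) (half_pos hε) (ε / 2) (half_pos hε)

lemma UpperRate.eexp_mul (hu : UpperRate w u r) (c : ℝ) :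
    UpperRate w (fun t => eexp (w t * c) * u t) (r + c) := fun ε hε => by
  filter_upwards [hu ε hε] with t ht
  calc eexp (w t * c) * u t ≤ eexp (w t * c) * eexp (w t * (r + ε)) := by gcongr
    _ = eexp (w t * (r + c + ε)) := by rw [← eexp_add]; ring_nf

lemma LowerRate.of_le_mul_eexp (hu : LowerRate w u r) (c : ℝ)
    (h : ∀ᶠ t in atTop, u t ≤ v t * eexp (w t * c)) : LowerRate w v (r - c) := fun ε hε => by
  filter_upwards [hu ε hε, h] with t hut ht
  refine (ENNReal.mul_le_mul_iff_left (eexp_ne_zero (w t * c)) (eexp_ne_top _)).1 ?_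
  calc eexp (w t * (r - c - ε)) * eexp (w t * c) = eexp (w t * (r - ε)) := by
        rw [← eexp_add]; ring_nf
    _ ≤ v t * eexp (w t * c) := hut.trans ht

lemma UpperRate.add (hw : Tendsto w atTop atTop) (hu : UpperRate w u r) (hv : UpperRate w v r') :
    UpperRate w (u + v) (max r r') := fun ε hε => by
  filter_upwards [hu (ε / 2) (half_pos hε), hv (ε / 2) (half_pos hε),
    hw.eventually_ge_atTop (Real.log 2 / (ε / 2))] with t hut hvt hwt
  have hw2 : Real.log 2 ≤ w t * (ε / 2) := (div_le_iff₀ (half_pos hε)).1 hwt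
  have hw0 : 0 ≤ w t := nonneg_of_mul_nonneg_left (hw2.trans' (Real.log_pos one_lt_two).le)
    (half_pos hε)
  have hmax : ∀ x, x ≤ max r r' → eexp (w t * (x + ε / 2)) ≤ eexp (w t * (max r r' + ε / 2)) :=
    fun x hx => eexp_le_eexp.2 (mul_le_mul_of_nonneg_left (by linarith) hw0)
  calc u t + v t ≤ eexp (w t * (max r r' + ε / 2)) + eexp (w t * (max r r' + ε / 2)) :=
        add_le_add (hut.trans (hmax r (le_max_left r r'))) (hvt.trans (hmax r' (le_max_right r r')))
    _ = 2 * eexp (w t * (max r r' + ε / 2)) := (two_mul _).symm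
    _ ≤ eexp (w t * (ε / 2)) * eexp (w t * (max r r' + ε / 2)) := by gcongr; exact two_le_eexp hw2
    _ = eexp (w t * (max r r' + ε)) := by rw [← eexp_add]; ring_nf

lemma LowerRate.of_le_add (hw : Tendsto w atTop atTop) (hu : LowerRate w u r)
    (hT : UpperRate w T r') (hr : r' < r) (h : ∀ᶠ t in atTop, u t ≤ v t + T t) :
    LowerRate w v r := fun ε hε => by
  set η := min (ε / 2) ((r - r') / 3)
  have hη : 0 < η := lt_min (half_pos hε) (by linarith)
  filter_upwards [hu η hη, hT η hη, h, hw.eventually_ge_atTop (Real.log 2 / η)]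
    with t hut hTt ht hwt
  have hw2 : Real.log 2 ≤ w t * η := (div_le_iff₀ hη).1 hwt
  have hw0 : 0 ≤ w t := nonneg_of_mul_nonneg_left (hw2.trans' (Real.log_pos one_lt_two).le) hη
  have hηε : η ≤ ε / 2 := min_le_left _ _
  have hηr : η ≤ (r - r') / 3 := min_le_right _ _
  set x := eexp (w t * (r - 2 * η))
  have hTx : T t ≤ x := hTt.trans (eexp_le_eexp.2 (mul_le_mul_of_nonneg_left (by linarith) hw0))
  have hxu : x + x ≤ u t := calc
    x + x = 2 * x := (two_mul x).symm
    _ ≤ eexp (w t * η) * x := by gcongr; exact two_le_eexp hw2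
    _ = eexp (w t * (r - η)) := by rw [← eexp_add]; ring_nf
    _ ≤ u t := hut
  calc eexp (w t * (r - ε)) ≤ x := eexp_le_eexp.2 (mul_le_mul_of_nonneg_left (by linarith) hw0)
    _ ≤ v t := ENNReal.le_of_add_le_add_right (eexp_ne_top _)
        (hxu.trans (ht.trans (add_le_add le_rfl hTx)))

lemma UpperRate.of_tendsto (hw : ∀ t, 0 < w t) (htop : ∀ᶠ t in atTop, u t ≠ ⊤)
    (h : Tendsto (fun t => Real.log (u t).toReal / w t) atTop (𝓝 r)) : UpperRate w u r :=
  fun ε hε => by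
  filter_upwards [htop, h.eventually (eventually_lt_nhds (lt_add_of_pos_right r hε))]
    with t ht hlt
  rcases eq_or_ne (u t) 0 with h0 | h0
  · simp [h0]
  · rw [← eexp_mul_log_toReal_div h0 ht (hw t).ne']
    exact eexp_le_eexp.2 (mul_le_mul_of_nonneg_left hlt.le (hw t).le)

lemma LowerRate.of_tendsto (hw : ∀ t, 0 < w t) (h0 : ∀ᶠ t in atTop, u t ≠ 0)
    (htop : ∀ᶠ t in atTop, u t ≠ ⊤)
    (h : Tendsto (fun t => Real.log (u t).toReal / w t) atTop (𝓝 r)) : LowerRate w u r :=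
  fun ε hε => by
  filter_upwards [h0, htop, h.eventually (eventually_gt_nhds (sub_lt_self r hε))]
    with t h0 ht hlt
  rw [← eexp_mul_log_toReal_div h0 ht (hw t).ne']
  exact eexp_le_eexp.2 (mul_le_mul_of_nonneg_left hlt.le (hw t).le)

lemma tendsto_log_toReal_div (hw : ∀ t, 0 < w t) (hup : UpperRate w u r)
    (hlow : LowerRate w u r) : Tendsto (fun t => Real.log (u t).toReal / w t) atTop (𝓝 r) := by
  refine Metric.tendsto_nhds.2 fun ε hε => ?_
  filter_upwards [hup (ε / 2) (half_pos hε), hlow (ε / 2) (half_pos hε)] with t hut hlt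
  have h0 : u t ≠ 0 := ((eexp_ne_zero _).bot_lt.trans_le hlt).ne'
  have htop : u t ≠ ⊤ := (hut.trans_lt ENNReal.ofReal_lt_top).ne
  rw [← eexp_mul_log_toReal_div h0 htop (hw t).ne', eexp_le_eexp] at hut hlt
  rw [Real.dist_eq, abs_sub_lt_iff]
  constructor <;> nlinarith [hw t]

end Rate

lemma eq_zero_of_frequently_toReal_eq_zero {u : ℝ → ℝ≥0∞} {w : ℝ → ℝ} {r : ℝ}
    (h : Tendsto (fun t => Real.log (u t).toReal / w t) atTop (𝓝 r))
    (hu : ∃ᶠ t in atTop, (u t).toReal = 0) : r = 0 :=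
  tendsto_nhds_unique_of_frequently_eq h tendsto_const_nhds (hu.mono fun t ht => by simp [ht])

section MGF

variable {α : Type*} [MeasurableSpace α] {μ : Measure α} {f : α → ℝ}

noncomputable def emgf (μ : Measure α) (f : α → ℝ) (s : ℝ) : ℝ≥0∞ := ∫⁻ x, eexp (s * f x) ∂μ

@[simp] lemma emgf_zero (μ : Measure α) (f : α → ℝ) : emgf μ f 0 = μ univ := by simp [emgf]

@[simp] lemma emgf_zero_measure (f : α → ℝ) (s : ℝ) : emgf (0 : Measure α) f s = 0 := by
  simp [emgf]

lemma emgf_ne_zero (hf : Measurable f) (hμ : μ ≠ 0) (s : ℝ) : emgf μ f s ≠ 0 := by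
  rw [emgf, ← pos_iff_ne_zero, lintegral_pos_iff_support (f := fun x => eexp (s * f x))
    (measurable_eexp.comp (hf.const_mul s)),
    Function.support_eq_univ fun x => eexp_ne_zero _]
  exact Measure.measure_univ_pos.2 hμ

lemma emgf_le_of_mem_uIcc {s σ : ℝ} (hσ : σ ∈ uIcc 0 s) :
    emgf μ f σ ≤ μ univ + emgf μ f s := by
  have hpt : ∀ x, eexp (σ * f x) ≤ 1 + eexp (s * f x) := fun x => by
    have : σ * f x ≤ 0 ∨ σ * f x ≤ s * f x := by
      rcases mem_uIcc.1 hσ with ⟨h0, h1⟩ | ⟨h0, h1⟩ <;> rcases le_total 0 (f x) with hx | hx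
      all_goals first | exact Or.inl (by nlinarith) | exact Or.inr (by nlinarith)
    rcases this with h | h
    · exact (eexp_le_eexp.2 h).trans (by simp)
    · exact (eexp_le_eexp.2 h).trans le_add_self
  calc emgf μ f σ ≤ ∫⁻ x, (1 + eexp (s * f x)) ∂μ := lintegral_mono hpt
    _ = μ univ + emgf μ f s := by rw [lintegral_add_left measurable_const, lintegral_one]; rfl

lemma setLIntegral_eexp_le (hf : Measurable f) {S : Set α} {s s' d : ℝ}
    (h : ∀ x ∈ S, s * f x ≤ s' * f x + d) :
    ∫⁻ x in S, eexp (s * f x) ∂μ ≤ eexp d * ∫⁻ x in S, eexp (s' * f x) ∂μ := by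
  rw [← lintegral_const_mul' _ _ (eexp_ne_top d)]
  refine setLIntegral_mono ((measurable_eexp.comp (hf.const_mul s')).const_mul _) fun x hx => ?_
  rw [← eexp_add]
  exact eexp_le_eexp.2 (by linarith [h x hx])

lemma measure_le_eexp_mul_emgf (hf : Measurable f) {S : Set α} {s c : ℝ}
    (h : ∀ x ∈ S, c ≤ s * f x) : μ S ≤ eexp (-c) * emgf μ f s :=
  calc μ S = ∫⁻ x in S, eexp (0 * f x) ∂μ := by simp
    _ ≤ eexp (-c) * ∫⁻ x in S, eexp (s * f x) ∂μ :=
        setLIntegral_eexp_le hf fun x hx => by linarith [h x hx]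
    _ ≤ eexp (-c) * emgf μ f s := by gcongr; exact setLIntegral_le_lintegral _ _

lemma measure_div_mem_ball_le (hf : Measurable f) {W : ℝ} (hW : 0 < W) (s q δ : ℝ) :
    μ {x | f x / W ∈ Metric.ball q δ} ≤ eexp (W * (|s| * δ - s * q)) * emgf μ f s := by
  refine (measure_le_eexp_mul_emgf hf (c := W * (s * q - |s| * δ)) fun x hx => ?_).trans_eq
    (by ring_nf)
  have hx : |f x / W - q| < δ := hx
  have h1 : -(|s| * |f x / W - q|) ≤ s * (f x / W - q) := by
    rw [← abs_mul]; exact neg_abs_le _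
  have h2 : s * q - |s| * δ ≤ s * (f x / W) := by
    nlinarith [mul_le_mul_of_nonneg_left hx.le (abs_nonneg s)]
  calc W * (s * q - |s| * δ) ≤ W * (s * (f x / W)) := mul_le_mul_of_nonneg_left h2 hW.le
    _ = s * f x := by field_simp

/-- The three terms bound the contributions of `f / W ∈ [θ - δ, θ + δ]`, of `f / W > θ + δ` and
of `f / W < θ - δ` to `emgf μ f s`. -/
lemma emgf_le_measure_mul_add (hf : Measurable f) {W : ℝ} (hW : 0 < W) {s v₁ v₂ : ℝ} (θ δ : ℝ)
    (hv₁ : s ≤ v₁) (hv₂ : v₂ ≤ s) :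
    emgf μ f s ≤ μ {x | f x / W ∈ Icc (θ - δ) (θ + δ)} * eexp (W * (s * θ + |s| * δ)) +
      (eexp (W * ((s - v₁) * (θ + δ))) * emgf μ f v₁ +
        eexp (W * ((s - v₂) * (θ - δ))) * emgf μ f v₂) := by
  set A := {x | f x / W ∈ Icc (θ - δ) (θ + δ)}
  set R := {x | θ + δ < f x / W}
  set L := {x | f x / W < θ - δ}
  have hfW : ∀ x, f x = W * (f x / W) := fun x => by field_simp
  have hA : ∫⁻ x in A, eexp (s * f x) ∂μ ≤ μ A * eexp (W * (s * θ + |s| * δ)) := by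
    refine (setLIntegral_eexp_le hf (s' := 0) (d := W * (s * θ + |s| * δ)) fun x hx => ?_).trans_eq
      (by simp [mul_comm])
    have hx : |f x / W - θ| ≤ δ := abs_sub_le_iff.2 ⟨by linarith [hx.2], by linarith [hx.1]⟩
    have h1 : s * (f x / W - θ) ≤ |s| * δ := (le_abs_self _).trans
      (by rw [abs_mul]; exact mul_le_mul_of_nonneg_left hx (abs_nonneg s))
    rw [hfW x]
    nlinarith [mul_le_mul_of_nonneg_left h1 hW.le]
  have hR : ∫⁻ x in R, eexp (s * f x) ∂μ ≤ eexp (W * ((s - v₁) * (θ + δ))) * emgf μ f v₁ := by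
    refine (setLIntegral_eexp_le hf (s' := v₁) fun x hx => ?_).trans
      (by gcongr; exact setLIntegral_le_lintegral _ _)
    have hx : θ + δ < f x / W := hx
    rw [hfW x]
    nlinarith [mul_nonneg (mul_nonneg hW.le (sub_nonneg.2 hv₁)) (sub_nonneg.2 hx.le)]
  have hL : ∫⁻ x in L, eexp (s * f x) ∂μ ≤ eexp (W * ((s - v₂) * (θ - δ))) * emgf μ f v₂ := by
    refine (setLIntegral_eexp_le hf (s' := v₂) fun x hx => ?_).trans
      (by gcongr; exact setLIntegral_le_lintegral _ _)
    have hx : f x / W < θ - δ := hx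
    rw [hfW x]
    nlinarith [mul_nonneg (mul_nonneg hW.le (sub_nonneg.2 hv₂)) (sub_nonneg.2 hx.le)]
  have hcover : univ ⊆ A ∪ (R ∪ L) := fun x _ => by
    by_cases h₁ : θ + δ < f x / W
    · exact Or.inr (Or.inl h₁)
    by_cases h₂ : f x / W < θ - δ
    · exact Or.inr (Or.inr h₂)
    exact Or.inl ⟨not_lt.1 h₂, not_lt.1 h₁⟩
  calc emgf μ f s = ∫⁻ x in univ, eexp (s * f x) ∂μ := by rw [Measure.restrict_univ]; rfl
    _ ≤ ∫⁻ x in A ∪ (R ∪ L), eexp (s * f x) ∂μ := lintegral_mono_set hcover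
    _ ≤ ∫⁻ x in A, eexp (s * f x) ∂μ +
          (∫⁻ x in R, eexp (s * f x) ∂μ + ∫⁻ x in L, eexp (s * f x) ∂μ) :=
        (lintegral_union_le _ _ _).trans (add_le_add le_rfl (lintegral_union_le _ _ _))
    _ ≤ _ := add_le_add hA (add_le_add hR hL)

end MGF

section Legendre

variable {a b : ℝ} {e : ℝ → ℝ}

lemma le_flt (hecont : ContinuousOn e (Icc a b)) (θ : ℝ) {s : ℝ} (hs : s ∈ Icc a b) :
    θ * s - e s ≤ flt a b e θ :=
  le_csSup ((isCompact_Icc.image_of_continuousOn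
    ((continuousOn_const.mul continuousOn_id).sub hecont)).bddAbove) ⟨s, hs, rfl⟩

lemma flt_eq_of_isMaxOn {θ s : ℝ} (hs : s ∈ Icc a b)
    (hmax : IsMaxOn (fun s => θ * s - e s) (Icc a b) s) : flt a b e θ = θ * s - e s :=
  IsGreatest.csSup_eq
    ⟨mem_image_of_mem _ hs, forall_mem_image.2 fun x hx => isMaxOn_iff.1 hmax x hx⟩

lemma exists_flt_eq (hab : a ≤ b) (hecont : ContinuousOn e (Icc a b)) (θ : ℝ) :
    ∃ s ∈ Icc a b, flt a b e θ = θ * s - e s := by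
  obtain ⟨s, hs, hmax⟩ := isCompact_Icc.exists_isMaxOn (nonempty_Icc.2 hab)
    ((continuousOn_const.mul continuousOn_id).sub hecont)
  exact ⟨s, hs, flt_eq_of_isMaxOn hs hmax⟩

lemma continuous_flt (hecont : ContinuousOn e (Icc a b)) : Continuous (flt a b e) := by
  have h := isCompact_univ.continuous_sSup (f := fun θ (s : Icc a b) => θ * s - e s)
    ((continuous_fst.mul (continuous_subtype_val.comp continuous_snd)).sub
      (hecont.domRestrict.comp continuous_snd))
  convert h using 2 with θ
  rw [flt, image_univ, image_eq_range]

lemma exists_mem_Ioo_hasDerivAt_isMaxOn (hab : a < b) (hecont : ContinuousOn e (Icc a b))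
    (hediff : ∀ s ∈ Ioo a b, DifferentiableAt ℝ e s) {da db θ : ℝ}
    (hda : HasDerivWithinAt e da (Ici a) a) (hdb : HasDerivWithinAt e db (Iic b) b)
    (hθ : θ ∈ Ioo da db) :
    ∃ s ∈ Ioo a b, HasDerivAt e θ s ∧ IsMaxOn (fun s => θ * s - e s) (Icc a b) s := by
  obtain ⟨s, hs, hmax⟩ := isCompact_Icc.exists_isMaxOn (nonempty_Icc.2 hab.le)
    ((continuousOn_const.mul continuousOn_id).sub hecont)
  have hg : ∀ {r x : ℝ} {T : Set ℝ}, HasDerivWithinAt e r T x →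
      HasDerivWithinAt (fun s => θ * s - e s) (θ - r) T x := fun h =>
    (((hasDerivWithinAt_id _ _).const_mul θ).sub h).congr_deriv (by ring)
  have hsa : s ≠ a := by
    intro h
    rw [h] at hmax
    have := hmax.localize.hasFDerivWithinAt_nonpos ((hg hda).mono Icc_subset_Ici_self)
      (sub_mem_posTangentConeAt_of_segment_subset (segment_eq_Icc hab.le).subset)
    rw [ContinuousLinearMap.toSpanSingleton_apply, smul_eq_mul] at this
    exact (mul_pos (sub_pos.2 hab) (sub_pos.2 hθ.1)).not_ge this
  have hsb : s ≠ b := by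
    intro h
    rw [h] at hmax
    have := hmax.localize.hasFDerivWithinAt_nonpos ((hg hdb).mono Icc_subset_Iic_self)
      (sub_mem_posTangentConeAt_of_segment_subset (by rw [segment_symm, segment_eq_Icc hab.le]))
    rw [ContinuousLinearMap.toSpanSingleton_apply, smul_eq_mul] at this
    exact (mul_pos (sub_pos.2 hab) (sub_pos.2 hθ.2)).not_ge (by linarith)
  have hs' : s ∈ Ioo a b := ⟨hs.1.lt_of_ne' hsa, hs.2.lt_of_ne hsb⟩
  have hd := (hediff s hs').hasDerivAt
  have h0 := (hmax.isLocalMax (Icc_mem_nhds hs'.1 hs'.2)).hasDerivAt_eq_zero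
    (((hasDerivAt_id s).const_mul θ).sub hd)
  refine ⟨s, hs', ?_, hmax⟩
  rw [mul_one, sub_eq_zero] at h0
  exact h0 ▸ hd

end Legendre

section Slope

variable {f : ℝ → ℝ} {f' x c r : ℝ}

lemma HasDerivAt.exists_mem_Ioc_sub_lt (hf : HasDerivAt f f' x) (hxc : x < c) (hr : f' < r) :
    ∃ y ∈ Ioc x c, f y - f x < r * (y - x) := by
  obtain ⟨y, hy, hyc⟩ := (((hf.hasDerivWithinAt (s := Ioi x)).limsup_slope_le' (lt_irrefl x)
    hr).and (Ioc_mem_nhdsGT hxc)).exists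
  rw [slope_def_field, div_lt_iff₀ (sub_pos.2 hyc.1)] at hy
  exact ⟨y, hyc, hy⟩

lemma HasDerivAt.exists_mem_Ico_sub_lt (hf : HasDerivAt f f' x) (hcx : c < x) (hr : r < f') :
    ∃ y ∈ Ico c x, f y - f x < r * (y - x) := by
  obtain ⟨y, hy, hyc⟩ := ((((hasDerivWithinAt_iff_tendsto_slope' (s := Iio x) (lt_irrefl x)).1
    (hf.hasDerivWithinAt (s := Iio x))).eventually (eventually_gt_nhds hr)).and
    (Ico_mem_nhdsLT hcx)).exists
  rw [slope_def_field, lt_div_iff_of_neg (sub_neg.2 hyc.2)] at hy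
  exact ⟨y, hyc, hy⟩

lemma HasDerivWithinAt.eq_zero_of_eqOn_Icc_left {d : ℝ} (hf : HasDerivWithinAt f f' (Ici x) x)
    (hxd : x < d) (h0 : EqOn f 0 (Icc x d)) : f' = 0 :=
  (uniqueDiffWithinAt_Ici x).eq_deriv _ (hf.congr_of_eventuallyEq
    (eventuallyEq_of_mem (Icc_mem_nhdsGE hxd) h0).symm (h0 (left_mem_Icc.2 hxd.le)).symm)
    (hasDerivWithinAt_const x _ 0)

lemma HasDerivWithinAt.eq_zero_of_eqOn_Icc_right {d : ℝ} (hf : HasDerivWithinAt f f' (Iic x) x)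
    (hdx : d < x) (h0 : EqOn f 0 (Icc d x)) : f' = 0 :=
  (uniqueDiffWithinAt_Iic x).eq_deriv _ (hf.congr_of_eventuallyEq
    (eventuallyEq_of_mem (Icc_mem_nhdsLE hdx) h0).symm (h0 (right_mem_Icc.2 hdx.le)).symm)
    (hasDerivWithinAt_const x _ 0)

end Slope

/-! In this section `C` stands for the set where the moment generating functions are eventually
finite, and `e` vanishes on `Icc a b \ C`. -/
section Vanishing

variable {a b da db q : ℝ} {e : ℝ → ℝ} {C : Set ℝ}

lemma eqOn_zero_closure_diff (hecont : ContinuousOn e (Icc a b)) (h0 : EqOn e 0 (Icc a b \ C)) :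
    EqOn e 0 (closure (Icc a b \ C)) :=
  h0.of_subset_closure (hecont.mono (closure_minimal sdiff_subset isClosed_Icc)) continuousOn_const
    subset_closure subset_rfl

lemma exists_mem_Ioc_of_hasDerivAt_lt (hz : EqOn e 0 (closure (Icc a b \ C))) {s θ : ℝ}
    (hs : s ∈ Ioo a b) (hθ : HasDerivAt e θ s) (hdb : HasDerivWithinAt e db (Iic b) b)
    (hθdb : θ < db) : ∃ v ∈ Ioc s b, v ∈ C := by
  by_contra! h
  have h0 : EqOn e 0 (Icc s b) := by
    rw [← closure_Ioc hs.2.ne]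
    refine hz.mono (closure_mono fun v hv => ?_)
    exact ⟨⟨hs.1.le.trans hv.1.le, hv.2⟩, h v hv⟩
  linarith [HasDerivWithinAt.eq_zero_of_eqOn_Icc_left hθ.hasDerivWithinAt hs.2 h0,
    HasDerivWithinAt.eq_zero_of_eqOn_Icc_right hdb hs.2 h0]

lemma exists_mem_Ico_of_lt_hasDerivAt (hz : EqOn e 0 (closure (Icc a b \ C))) {s θ : ℝ}
    (hs : s ∈ Ioo a b) (hθ : HasDerivAt e θ s) (hda : HasDerivWithinAt e da (Ici a) a)
    (hdaθ : da < θ) : ∃ v ∈ Ico a s, v ∈ C := by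
  by_contra! h
  have h0 : EqOn e 0 (Icc a s) := by
    rw [← closure_Ico hs.1.ne]
    refine hz.mono (closure_mono fun v hv => ?_)
    exact ⟨⟨hv.1, hv.2.le.trans hs.2.le⟩, h v hv⟩
  linarith [HasDerivWithinAt.eq_zero_of_eqOn_Icc_left hda hs.1 h0,
    HasDerivWithinAt.eq_zero_of_eqOn_Icc_right hθ.hasDerivWithinAt hs.1 h0]

/-- Beyond `sSup (C ∩ Icc a b)` the function `e` vanishes, so `db = 0` and moving `s` back to
that point does not decrease `q * s - e s`. -/
lemma exists_mem_closure_le_of_nonneg (hC0 : (0 : ℝ) ∈ C) (hC : C.OrdConnected) (ha : a ≤ 0)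
    (hz : EqOn e 0 (closure (Icc a b \ C))) (hdb : HasDerivWithinAt e db (Iic b) b) (hq : q ≤ db)
    {s : ℝ} (hs : s ∈ Icc 0 b) : ∃ s' ∈ closure (C ∩ Icc a b), q * s - e s ≤ q * s' - e s' := by
  set K := C ∩ Icc a b
  have hK0 : (0 : ℝ) ∈ K := ⟨hC0, ha, hs.1.trans hs.2⟩
  have hKb : BddAbove K := ⟨b, fun v hv => hv.2.2⟩
  have hM0 : 0 ≤ sSup K := le_csSup hKb hK0
  rcases le_or_gt s (sSup K) with hsM | hMs
  · refine ⟨s, ?_, le_rfl⟩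
    rcases hsM.lt_or_eq with hsM | rfl
    · obtain ⟨k, hk, hsk⟩ := exists_lt_of_lt_csSup ⟨0, hK0⟩ hsM
      exact subset_closure ((hC.inter ordConnected_Icc).out hK0 hk ⟨hs.1, hsk.le⟩)
    · exact csSup_mem_closure ⟨0, hK0⟩ hKb
  · have hMb : sSup K < b := hMs.trans_le hs.2
    have h0 : EqOn e 0 (Icc (sSup K) b) := by
      rw [← closure_Ioc hMb.ne]
      refine hz.mono (closure_mono fun v hv => ?_)
      refine ⟨⟨ha.trans (hM0.trans hv.1.le), hv.2⟩, fun hvC => ?_⟩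
      exact (le_csSup hKb ⟨hvC, ha.trans (hM0.trans hv.1.le), hv.2⟩).not_gt hv.1
    have hq0 : q ≤ 0 := HasDerivWithinAt.eq_zero_of_eqOn_Icc_right hdb hMb h0 ▸ hq
    refine ⟨sSup K, csSup_mem_closure ⟨0, hK0⟩ hKb, ?_⟩
    rw [h0 ⟨hMs.le, hs.2⟩, h0 ⟨le_rfl, hMb.le⟩]
    simpa using mul_le_mul_of_nonpos_left hMs.le hq0

lemma exists_mem_closure_le_of_nonpos (hC0 : (0 : ℝ) ∈ C) (hC : C.OrdConnected) (hb : 0 ≤ b)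
    (hz : EqOn e 0 (closure (Icc a b \ C))) (hda : HasDerivWithinAt e da (Ici a) a) (hq : da ≤ q)
    {s : ℝ} (hs : s ∈ Icc a 0) : ∃ s' ∈ closure (C ∩ Icc a b), q * s - e s ≤ q * s' - e s' := by
  set K := C ∩ Icc a b
  have hK0 : (0 : ℝ) ∈ K := ⟨hC0, hs.1.trans hs.2, hb⟩
  have hKb : BddBelow K := ⟨a, fun v hv => hv.2.1⟩
  have hm0 : sInf K ≤ 0 := csInf_le hKb hK0
  rcases le_or_gt (sInf K) s with hms | hsm
  · refine ⟨s, ?_, le_rfl⟩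
    rcases hms.lt_or_eq with hms | rfl
    · obtain ⟨k, hk, hks⟩ := exists_lt_of_csInf_lt ⟨0, hK0⟩ hms
      exact subset_closure ((hC.inter ordConnected_Icc).out hk hK0 ⟨hks.le, hs.2⟩)
    · exact csInf_mem_closure ⟨0, hK0⟩ hKb
  · have ham : a < sInf K := hs.1.trans_lt hsm
    have h0 : EqOn e 0 (Icc a (sInf K)) := by
      rw [← closure_Ico ham.ne]
      refine hz.mono (closure_mono fun v hv => ?_)
      refine ⟨⟨hv.1, (hv.2.le.trans hm0).trans hb⟩, fun hvC => ?_⟩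
      exact (csInf_le hKb ⟨hvC, hv.1, (hv.2.le.trans hm0).trans hb⟩).not_gt hv.2
    have hq0 : 0 ≤ q := HasDerivWithinAt.eq_zero_of_eqOn_Icc_left hda ham h0 ▸ hq
    refine ⟨sInf K, csInf_mem_closure ⟨0, hK0⟩ hKb, ?_⟩
    rw [h0 ⟨hs.1, hsm.le⟩, h0 ⟨ham.le, le_rfl⟩]
    simpa using mul_le_mul_of_nonneg_left hsm.le hq0

lemma exists_mem_flt_sub_lt (hecont : ContinuousOn e (Icc a b)) (hC0 : (0 : ℝ) ∈ C)
    (hC : C.OrdConnected) (h0 : (0 : ℝ) ∈ Icc a b) (hz : EqOn e 0 (closure (Icc a b \ C)))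
    (hda : HasDerivWithinAt e da (Ici a) a) (hdb : HasDerivWithinAt e db (Iic b) b)
    (hq : q ∈ Icc da db) {ε : ℝ} (hε : 0 < ε) :
    ∃ s ∈ C ∩ Icc a b, flt a b e q - ε < q * s - e s := by
  obtain ⟨s₀, hs₀, hflt⟩ := exists_flt_eq (h0.1.trans h0.2) hecont q
  obtain ⟨s, hs, hle⟩ : ∃ s ∈ closure (C ∩ Icc a b), q * s₀ - e s₀ ≤ q * s - e s := by
    rcases le_total 0 s₀ with h | h
    · exact exists_mem_closure_le_of_nonneg hC0 hC h0.1 hz hdb hq.2 ⟨h, hs₀.2⟩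
    · exact exists_mem_closure_le_of_nonpos hC0 hC h0.2 hz hda hq.1 ⟨hs₀.1, h⟩
  have hcw : ContinuousWithinAt (fun s => q * s - e s) (C ∩ Icc a b) s :=
    (((continuousOn_const.mul continuousOn_id).sub hecont) s
      (closure_minimal inter_subset_right isClosed_Icc hs)).mono inter_subset_right
  have := mem_closure_iff_nhdsWithin_neBot.1 hs
  obtain ⟨s', hlt, hs'⟩ :=
    ((hcw.eventually (eventually_gt_nhds (sub_lt_self _ hε))).and self_mem_nhdsWithin).exists
  exact ⟨s', hs', by linarith⟩

end Vanishing

section Family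

variable {Ω : ℝ → Type*} [∀ t, MeasurableSpace (Ω t)] {P : ∀ t, Measure (Ω t)}
  {X : ∀ t, Ω t → ℝ} {w : ℝ → ℝ} {a b : ℝ} {e : ℝ → ℝ}

/-- The convergence part of assumption (LD). -/
def TendstoSCGF (P : ∀ t, Measure (Ω t)) (X : ∀ t, Ω t → ℝ) (w e : ℝ → ℝ) (S : Set ℝ) : Prop :=
  ∀ s ∈ S, Tendsto (fun t => Real.log (emgf (P t) (X t) s).toReal / w t) atTop (𝓝 (e s))

/-- Off this set `emgf` is infinite infinitely often; `toReal` turns it into `0` and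
`Real.log 0 = 0`, so a limit `e s` of the scaled logarithms can only be `0` there. -/
def finiteMGFSet (P : ∀ t, Measure (Ω t)) (X : ∀ t, Ω t → ℝ) : Set ℝ :=
  {s | ∀ᶠ t in atTop, emgf (P t) (X t) s ≠ ⊤}

lemma zero_mem_finiteMGFSet [∀ t, IsFiniteMeasure (P t)] : (0 : ℝ) ∈ finiteMGFSet P X :=
  Eventually.of_forall fun t => by rw [emgf_zero]; exact measure_ne_top _ _

lemma ordConnected_finiteMGFSet [∀ t, IsFiniteMeasure (P t)] : (finiteMGFSet P X).OrdConnected :=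
  ordConnected_of_uIcc_subset_left fun _ hs _ hσ => hs.mono fun _ ht =>
    ((emgf_le_of_mem_uIcc hσ).trans_lt (ENNReal.add_lt_top.2 ⟨measure_lt_top _ _, ht.lt_top⟩)).ne

lemma eqOn_zero_diff_finiteMGFSet (he : TendstoSCGF P X w e (Icc a b)) :
    EqOn e 0 (Icc a b \ finiteMGFSet P X) := fun s hs =>
  eq_zero_of_frequently_toReal_eq_zero (he s hs.1)
    ((not_eventually.1 hs.2).mono fun t ht => by simp [not_not.1 ht])

lemma eventually_measure_ne_zero (hab : a < b) (he : TendstoSCGF P X w e (Icc a b)) {da db : ℝ}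
    (hda : HasDerivWithinAt e da (Ici a) a) (hdb : HasDerivWithinAt e db (Iic b) b)
    (hd : da < db) : ∀ᶠ t in atTop, P t ≠ 0 := by
  by_contra h
  have h0 : EqOn e 0 (Icc a b) := fun s hs => eq_zero_of_frequently_toReal_eq_zero (he s hs)
    ((not_eventually.1 h).mono fun t ht => by simp [not_not.1 ht])
  linarith [HasDerivWithinAt.eq_zero_of_eqOn_Icc_left hda hab h0,
    HasDerivWithinAt.eq_zero_of_eqOn_Icc_right hdb hab h0]

lemma upperRate_measure_ball [∀ t, IsFiniteMeasure (P t)] (hX : ∀ t, Measurable (X t))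
    (hw : ∀ t, 0 < w t) (h0 : (0 : ℝ) ∈ Icc a b) (he : TendstoSCGF P X w e (Icc a b))
    (hecont : ContinuousOn e (Icc a b)) {da db q ε : ℝ} (hda : HasDerivWithinAt e da (Ici a) a)
    (hdb : HasDerivWithinAt e db (Iic b) b) (hq : q ∈ Icc da db) (hε : 0 < ε) :
    ∃ δ > 0, UpperRate w (fun t => P t {x | X t x / w t ∈ Metric.ball q δ}) (-flt a b e q + ε) := by
  obtain ⟨s, ⟨hsC, hs⟩, hlt⟩ := exists_mem_flt_sub_lt hecont zero_mem_finiteMGFSet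
    ordConnected_finiteMGFSet h0 (eqOn_zero_closure_diff hecont (eqOn_zero_diff_finiteMGFSet he))
    hda hdb hq (half_pos hε)
  refine ⟨ε / 2 / (|s| + 1), by positivity,
    ((UpperRate.of_tendsto hw hsC (he s hs)).eexp_mul _).mono hw
      (Eventually.of_forall fun t => measure_div_mem_ball_le (hX t) (hw t) s q _) ?_⟩
  linarith [abs_mul_div_abs_add_one_le s (half_pos hε).le]

lemma upperRate_measure_of_isCompact [∀ t, IsFiniteMeasure (P t)] (hX : ∀ t, Measurable (X t))
    (hw : ∀ t, 0 < w t) (hwtop : Tendsto w atTop atTop) (h0 : (0 : ℝ) ∈ Icc a b)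
    (he : TendstoSCGF P X w e (Icc a b)) (hecont : ContinuousOn e (Icc a b)) {da db : ℝ}
    (hda : HasDerivWithinAt e da (Ici a) a) (hdb : HasDerivWithinAt e db (Iic b) b)
    {K : Set ℝ} (hK : IsCompact K) (hKsub : K ⊆ Icc da db) {r : ℝ}
    (hr : ∀ q ∈ K, r ≤ flt a b e q) : UpperRate w (fun t => P t {x | X t x / w t ∈ K}) (-r) := by
  refine UpperRate.of_forall_add fun ε hε => hK.induction_on
    (p := fun S => UpperRate w (fun t => P t {x | X t x / w t ∈ S}) (-r + ε)) ?_ ?_ ?_ ?_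
  · exact fun _ _ => Eventually.of_forall fun _ => by simp
  · exact fun S T hST hT =>
      hT.mono hw (Eventually.of_forall fun t => measure_mono fun x hx => hST hx) le_rfl
  · exact fun S T hS hT => (hS.add hwtop hT).mono hw
      (Eventually.of_forall fun t => measure_union_le (μ := P t) {x | X t x / w t ∈ S}
        {x | X t x / w t ∈ T}) (max_self _).le
  · intro q hq
    obtain ⟨δ, hδ, h⟩ := upperRate_measure_ball hX hw h0 he hecont hda hdb (hKsub hq) hε
    exact ⟨_, mem_nhdsWithin_of_mem_nhds (Metric.ball_mem_nhds q hδ),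
      h.mono hw (Eventually.of_forall fun _ => le_rfl) (by linarith [hr q hq])⟩

lemma lowerRate_measure_Icc (hX : ∀ t, Measurable (X t)) (hw : ∀ t, 0 < w t)
    (hwtop : Tendsto w atTop atTop) {s v₁ v₂ r₀ r₁ r₂ : ℝ} (θ δ : ℝ)
    (h₀ : LowerRate w (fun t => emgf (P t) (X t) s) r₀)
    (h₁ : UpperRate w (fun t => emgf (P t) (X t) v₁) r₁)
    (h₂ : UpperRate w (fun t => emgf (P t) (X t) v₂) r₂) (hv₁ : s ≤ v₁) (hv₂ : v₂ ≤ s)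
    (hr₁ : r₁ + (s - v₁) * (θ + δ) < r₀) (hr₂ : r₂ + (s - v₂) * (θ - δ) < r₀) :
    LowerRate w (fun t => P t {x | X t x / w t ∈ Icc (θ - δ) (θ + δ)})
      (r₀ - (s * θ + |s| * δ)) :=
  LowerRate.of_le_mul_eexp (h₀.of_le_add hwtop ((h₁.eexp_mul _).add hwtop (h₂.eexp_mul _))
    (max_lt hr₁ hr₂)
    (Eventually.of_forall fun t => emgf_le_measure_mul_add (hX t) (hw t) θ δ hv₁ hv₂))
    _ (Eventually.of_forall fun _ => le_rfl)

lemma lowerRate_measure_of_mem [∀ t, IsFiniteMeasure (P t)] (hX : ∀ t, Measurable (X t))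
    (hw : ∀ t, 0 < w t) (hwtop : Tendsto w atTop atTop) (hab : a < b)
    (he : TendstoSCGF P X w e (Icc a b)) (hecont : ContinuousOn e (Icc a b))
    (hediff : ∀ s ∈ Ioo a b, DifferentiableAt ℝ e s) {da db : ℝ}
    (hda : HasDerivWithinAt e da (Ici a) a) (hdb : HasDerivWithinAt e db (Iic b) b)
    {J : Set ℝ} (hJ : IsOpen J) (hJsub : J ⊆ Ioo da db) {θ : ℝ} (hθ : θ ∈ J) :
    LowerRate w (fun t => P t {x | X t x / w t ∈ J}) (-flt a b e θ) := by
  obtain ⟨s, hs, hderiv, hmax⟩ :=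
    exists_mem_Ioo_hasDerivAt_isMaxOn hab hecont hediff hda hdb (hJsub hθ)
  have hz := eqOn_zero_closure_diff hecont (eqOn_zero_diff_finiteMGFSet he)
  obtain ⟨v, hv, hvC⟩ := exists_mem_Ioc_of_hasDerivAt_lt hz hs hderiv hdb (hJsub hθ).2
  obtain ⟨u, hu, huC⟩ := exists_mem_Ico_of_lt_hasDerivAt hz hs hderiv hda (hJsub hθ).1
  have huv : Icc u v ⊆ finiteMGFSet P X ∩ Icc a b := fun r hr =>
    ⟨ordConnected_finiteMGFSet.out huC hvC hr, hu.1.trans hr.1, hr.2.trans hv.2⟩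
  have hupper : ∀ r ∈ Icc u v, UpperRate w (fun t => emgf (P t) (X t) r) (e r) := fun r hr =>
    UpperRate.of_tendsto hw (huv hr).1 (he r (huv hr).2)
  have hsuv : s ∈ Icc u v := ⟨hu.2.le, hv.1.le⟩
  have hlower : LowerRate w (fun t => emgf (P t) (X t) s) (e s) := LowerRate.of_tendsto hw
    ((eventually_measure_ne_zero hab he hda hdb ((hJsub hθ).1.trans (hJsub hθ).2)).mono
      fun t ht => emgf_ne_zero (hX t) ht s) (huv hsuv).1 (he s (huv hsuv).2)
  rw [flt_eq_of_isMaxOn (Ioo_subset_Icc_self hs) hmax]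
  refine LowerRate.of_forall_sub fun ε hε => ?_
  obtain ⟨ρ, hρ, hball⟩ := Metric.isOpen_iff.1 hJ θ hθ
  set δ := min (ρ / 2) (ε / (|s| + 1))
  have hδ : 0 < δ := lt_min (half_pos hρ) (by positivity)
  have hδJ : Icc (θ - δ) (θ + δ) ⊆ J := by
    rw [← Real.closedBall_eq_Icc]
    exact (Metric.closedBall_subset_ball ((min_le_left _ _).trans_lt (half_lt_self hρ))).trans hball
  obtain ⟨v₁, hv₁, hslope₁⟩ :=
    HasDerivAt.exists_mem_Ioc_sub_lt hderiv hv.1 (lt_add_of_pos_right θ hδ)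
  obtain ⟨v₂, hv₂, hslope₂⟩ := HasDerivAt.exists_mem_Ico_sub_lt hderiv hu.2 (sub_lt_self θ hδ)
  refine (lowerRate_measure_Icc hX hw hwtop θ δ hlower
    (hupper v₁ ⟨hu.2.le.trans hv₁.1.le, hv₁.2⟩) (hupper v₂ ⟨hv₂.1, hv₂.2.le.trans hv.1.le⟩)
    hv₁.1.le hv₂.2.le (by linarith) (by linarith)).mono hw
    (Eventually.of_forall fun t => measure_mono fun x hx => hδJ hx) ?_
  have := mul_le_mul_of_nonneg_left (min_le_right (ρ / 2) (ε / (|s| + 1))) (abs_nonneg s)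
  linarith [abs_mul_div_abs_add_one_le s hε.le]

end Family

end LocalGartnerEllis

open LocalGartnerEllis in
/-- Local Gärtner–Ellis theorem: under assumption (LD), if `e` is differentiable on `(a,b)`
and `0 ∈ (a,b)`, then for every open `J ⊆ (D⁺e(a), D⁻e(b))`:
`lim (1/w_t) log P_t(X_t/w_t ∈ J) = − inf_{θ∈J} φ(θ)`. -/
theorem local_gartner_ellis {Ω : ℝ → Type*} [∀ t, MeasurableSpace (Ω t)]
    (P : ∀ t, Measure (Ω t)) (hP : ∀ t, IsFiniteMeasure (P t))
    (X : ∀ t, Ω t → ℝ) (hX : ∀ t, Measurable (X t))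
    (w : ℝ → ℝ) (hw : ∀ t, 0 < w t) (hwtop : Tendsto w atTop atTop)
    (a b : ℝ) (h0 : (0 : ℝ) ∈ Set.Ioo a b)
    (e : ℝ → ℝ)
    (he : ∀ s ∈ Set.Icc a b, Tendsto
      (fun t => Real.log ((∫⁻ x, ENNReal.ofReal (Real.exp (s * X t x)) ∂ (P t)).toReal) / w t)
      atTop (nhds (e s)))
    (hecont : ContinuousOn e (Set.Icc a b))
    (hediff : ∀ s ∈ Set.Ioo a b, DifferentiableAt ℝ e s)
    (da db : ℝ)
    (hda : HasDerivWithinAt e da (Set.Ici a) a)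
    (hdb : HasDerivWithinAt e db (Set.Iic b) b)
    (J : Set ℝ) (hJopen : IsOpen J) (hJ : J ⊆ Set.Ioo da db) :
    Tendsto (fun t => Real.log ((P t {x | X t x / w t ∈ J}).toReal) / w t) atTop
      (nhds (-sInf (flt a b e '' J))) := by
  rcases J.eq_empty_or_nonempty with rfl | hJne
  · simp
  have hbdd : BddBelow (flt a b e '' J) :=
    ⟨-e 0, forall_mem_image.2 fun θ _ => by simpa using le_flt hecont θ (Ioo_subset_Icc_self h0)⟩
  have hK : closure J ⊆ Icc da db := closure_minimal (hJ.trans Ioo_subset_Icc_self) isClosed_Icc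
  refine tendsto_log_toReal_div hw ?_ ?_
  · refine (upperRate_measure_of_isCompact hX hw hwtop (Ioo_subset_Icc_self h0) he hecont hda hdb
      (isCompact_Icc.of_isClosed_subset isClosed_closure hK) hK fun q hq => ?_).mono hw
      (Eventually.of_forall fun t => measure_mono fun x hx => subset_closure hx) le_rfl
    exact closure_minimal (fun θ hθ => csInf_le hbdd (mem_image_of_mem (flt a b e) hθ))
      (isClosed_le continuous_const (continuous_flt hecont)) hq
  · refine LowerRate.of_forall_sub fun ε hε => ?_
    obtain ⟨_, ⟨θ, hθ, rfl⟩, hlt⟩ :=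
      exists_lt_of_csInf_lt (hJne.image (flt a b e)) (lt_add_of_pos_right _ hε)
    exact (lowerRate_measure_of_mem hX hw hwtop (h0.1.trans h0.2) he hecont hediff hda hdb hJopen hJ
      hθ).mono hw (Eventually.of_forall fun _ => le_rfl) (by linarith)
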